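/- arXiv:0906.0911 — 4 statements merged into one kernel-verified Lean document; each statement's English description precedes it below -/
import Mathlib

section
/- Let S be a numerical semigroup with multiplicity e and maximal ideal M = S \ {0}. For each n ≥ 0 and each residue class i modulo e, let ω_{n,i} denote the smallest element of nM congruent to i modulo e (where 0M := S and nM = M + ... + M, n times). Then for all n and i, either ω_{n+1,i} = ω_{n,i} or ω_{n+1,i} = ω_{n,i} + e. -/
open Pointwise

/-- A numerical semigroup: subset of ℕ closed under addition, containing 0,
with finite complement. -/
def IsNumericalSemigroup (S : Set ℕ) : Prop :=
  0 ∈ S ∧ (∀ a ∈ S, ∀ b ∈ S, a + b ∈ S) ∧ (Sᶜ : Set ℕ).Finite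

/-- `e` is the multiplicity of `S`: the least positive element. -/
def IsMultiplicity (S : Set ℕ) (e : ℕ) : Prop :=
  IsLeast {m | m ∈ S ∧ 0 < m} e

/-- `nfold S M n` is the n-fold sumset `M + ⋯ + M`, with `0M := S`. -/
def nfold (S M : Set ℕ) : ℕ → Set ℕ
  | 0 => S
  | n + 1 => nfold S M n + M

/-- `omegaNI S M e n i` is the smallest element of `nM` congruent to `i` mod `e`. -/
noncomputable def omegaNI (S M : Set ℕ) (e n i : ℕ) : ℕ :=
  sInf {m | m ∈ nfold S M n ∧ m % e = i}

/-- The Apery set of `I` with respect to `e`: smallest elements of `I`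
in each residue class modulo `e`. -/
def aperySet (e : ℕ) (I : Set ℕ) : Set ℕ :=
  {m | m ∈ I ∧ ∀ k ∈ I, k % e = m % e → m ≤ k}

lemma nfold_add_mem (S M : Set ℕ) (hM : M ⊆ S) (hadd : ∀ a ∈ S, ∀ b ∈ S, a + b ∈ S) :
    ∀ n, ∀ x ∈ nfold S M n, ∀ m ∈ M, x + m ∈ nfold S M n := by
  intro n
  induction n with
  | zero => intro x hx m hm; exact hadd x hx m (hM hm)
  | succ k ih =>
    intro x hx m hm
    rw [nfold, Set.mem_add] at hx
    obtain ⟨a, ha, b, hb, rfl⟩ := hx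
    rw [nfold, Set.mem_add]
    exact ⟨a + m, ih a ha m hm, b, hb, by ring⟩

lemma nfold_large_mem (S M : Set ℕ) (e c : ℕ) (hc : ∀ k, c ≤ k → k ∈ S)
    (heM : e ∈ M) (hepos : 0 < e) :
    ∀ n, ∀ k, c + n * e ≤ k → k ∈ nfold S M n := by
  intro n
  induction n with
  | zero => intro k hk; exact hc k (by omega)
  | succ m ih =>
    intro k hk
    have hme : (m + 1) * e = m * e + e := by ring
    have h1 : k - e ∈ nfold S M m := ih _ (by omega)
    rw [nfold, Set.mem_add]
    exact ⟨k - e, h1, e, heM, by omega⟩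

theorem omega_step_zero_or_e (S : Set ℕ) (hS : IsNumericalSemigroup S)
    (e : ℕ) (he : IsMultiplicity S e) (n i : ℕ) (hi : i < e) :
    omegaNI S (S \ {0}) e (n + 1) i = omegaNI S (S \ {0}) e n i ∨
    omegaNI S (S \ {0}) e (n + 1) i = omegaNI S (S \ {0}) e n i + e := by
  obtain ⟨h0, hadd, hfin⟩ := hS
  obtain ⟨⟨heS, hepos⟩, hleast⟩ := he
  set M : Set ℕ := S \ {0} with hMdef
  have hM : M ⊆ S := Set.diff_subset
  have heM : e ∈ M := ⟨heS, by simp; omega⟩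
  -- S contains all sufficiently large naturals
  obtain ⟨c, hc⟩ : ∃ c, ∀ k, c ≤ k → k ∈ S := by
    rcases Set.Finite.bddAbove hfin with ⟨c, hcb⟩
    exact ⟨c + 1, fun k hk => by
      by_contra hkn
      have := hcb hkn
      omega⟩
  -- sets
  set Tn : Set ℕ := {m | m ∈ nfold S M n ∧ m % e = i} with hTn
  set Tn1 : Set ℕ := {m | m ∈ nfold S M (n + 1) ∧ m % e = i} with hTn1
  have hne : ∀ N : ℕ, ({m | m ∈ nfold S M N ∧ m % e = i} : Set ℕ).Nonempty := by
    intro N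
    refine ⟨i + e * (c + N * e), ?_, ?_⟩
    · exact nfold_large_mem S M e c hc heM hepos N _ (by have := Nat.le_mul_of_pos_left (c + N * e) hepos; omega)
    · simp [Nat.add_mul_mod_self_left, Nat.mod_eq_of_lt hi]
  have haTn : omegaNI S M e n i ∈ Tn := Nat.sInf_mem (hne n)
  have hbTn1 : omegaNI S M e (n + 1) i ∈ Tn1 := Nat.sInf_mem (hne (n + 1))
  set a := omegaNI S M e n i
  set b := omegaNI S M e (n + 1) i
  -- (n+1)M ⊆ nM
  have hsub : nfold S M (n + 1) ⊆ nfold S M n := by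
    intro x hx
    rw [nfold, Set.mem_add] at hx
    obtain ⟨p, hp, q, hq, rfl⟩ := hx
    exact nfold_add_mem S M hM hadd n p hp q hq
  have hab : a ≤ b := Nat.sInf_le ⟨hsub hbTn1.1, hbTn1.2⟩
  have hba : b ≤ a + e := by
    apply Nat.sInf_le
    constructor
    · rw [nfold, Set.mem_add]
      exact ⟨a, haTn.1, e, heM, rfl⟩
    · rw [Nat.add_mod_right]; exact haTn.2
  have hmod : a % e = b % e := haTn.2.trans hbTn1.2.symm
  have hdvd : e ∣ b - a := (Nat.modEq_iff_dvd' hab).mp hmod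
  rcases Nat.lt_or_ge (b - a) e with h | h
  · left
    have : b - a = 0 := Nat.eq_zero_of_dvd_of_lt hdvd h
    omega
  · right; omega
end

section
/- Let S be a numerical semigroup with multiplicity e, maximal ideal M, and reduction number r (least n with (n+1)M = e + nM). Then r ≤ e − 1. -/
open Pointwise

section Aux

variable {S M : Set ℕ}

lemma mem_nfold_of_list (hcl : ∀ a ∈ S, ∀ b ∈ S, a + b ∈ S) :
    ∀ l : List ℕ, (∀ m ∈ l, m ∈ M) → ∀ s ∈ S, s + l.sum ∈ nfold S M l.length := by
  intro l
  induction l using List.reverseRecOn with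
  | nil => intro _ s hs; simpa [nfold] using hs
  | append_singleton l m ih =>
      intro hmem s hs
      have h1 : s + l.sum ∈ nfold S M l.length :=
        ih (fun x hx => hmem x (by simp [hx])) s hs
      have h2 : m ∈ M := hmem m (by simp)
      have : (s + l.sum) + m ∈ nfold S M l.length + M := Set.add_mem_add h1 h2
      simpa [nfold, add_assoc] using this

lemma exists_list_of_mem_nfold :
    ∀ n, ∀ x ∈ nfold S M n, ∃ s ∈ S, ∃ l : List ℕ,
      (∀ m ∈ l, m ∈ M) ∧ l.length = n ∧ x = s + l.sum := by
  intro n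
  induction n with
  | zero => intro x hx; exact ⟨x, hx, [], by simp, by simp, by simp⟩
  | succ n ih =>
      intro x hx
      obtain ⟨y, hy, m, hm, hxy⟩ := Set.mem_add.mp hx
      obtain ⟨s, hs, l, hl, hlen, hys⟩ := ih y hy
      refine ⟨s, hs, l ++ [m], ?_, by simp [hlen], by simp [← hxy, hys, add_assoc]⟩
      intro a ha
      rcases List.mem_append.mp ha with h | h
      · exact hl a h
      · exact (List.mem_singleton.mp h) ▸ hm

lemma nfold_succ_subset (hcl : ∀ a ∈ S, ∀ b ∈ S, a + b ∈ S) (hMS : M ⊆ S) :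
    ∀ n, nfold S M (n + 1) ⊆ nfold S M n := by
  intro n
  induction n with
  | zero =>
      intro x hx
      obtain ⟨a, ha, b, hb, hab⟩ := Set.mem_add.mp hx
      exact hab ▸ hcl a ha b (hMS hb)
  | succ n ih =>
      intro x hx
      obtain ⟨a, ha, b, hb, hab⟩ := Set.mem_add.mp hx
      exact hab ▸ Set.add_mem_add (ih ha) hb

lemma nfold_anti (hcl : ∀ a ∈ S, ∀ b ∈ S, a + b ∈ S) (hMS : M ⊆ S)
    {n m : ℕ} (h : n ≤ m) : nfold S M m ⊆ nfold S M n := by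
  induction m with
  | zero => simp [Nat.le_zero.mp h]
  | succ m ih =>
      rcases Nat.lt_or_ge n (m + 1) with h' | h'
      · exact (nfold_succ_subset hcl hMS m).trans (ih (Nat.lt_succ_iff.mp h'))
      · have : n = m + 1 := le_antisymm h h'
        simp [this]

lemma length_mul_le_sum {e : ℕ} :
    ∀ l : List ℕ, (∀ m ∈ l, e ≤ m) → l.length * e ≤ l.sum := by
  intro l
  induction l with
  | nil => simp
  | cons a l ih =>
      intro h
      have h1 : e ≤ a := h a (by simp)
      have h2 := ih (fun m hm => h m (by simp [hm]))
      simp only [List.length_cons, List.sum_cons]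
      calc (l.length + 1) * e = l.length * e + e := by ring
        _ ≤ l.sum + a := by omega
        _ = a + l.sum := by ring

end Aux

theorem reduction_number_le (S : Set ℕ) (hS : IsNumericalSemigroup S)
    (e : ℕ) (he : IsMultiplicity S e) (r : ℕ)
    (hr : IsLeast {n | nfold S (S \ {0}) (n + 1) = (e + ·) '' nfold S (S \ {0}) n} r) :
    r ≤ e - 1 := by
  obtain ⟨h0, hcl, hfin⟩ := hS
  obtain ⟨⟨heS, hepos⟩, helb⟩ := he
  set M : Set ℕ := S \ {0} with hM
  have hMS : M ⊆ S := Set.diff_subset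
  have heM : e ∈ M := ⟨heS, by simp; omega⟩
  have hle : ∀ m ∈ M, e ≤ m := fun m hm =>
    helb ⟨hm.1, Nat.pos_of_ne_zero (by simpa using hm.2)⟩
  -- Key: eM ⊆ e + (e-1)M
  have key : ∀ x ∈ nfold S M e, ∃ y ∈ nfold S M (e - 1), x = e + y := by
    intro x hx
    obtain ⟨s, hs, l, hlM, hlen, hxval⟩ := exists_list_of_mem_nfold e x hx
    -- pigeonhole on partial sums mod e
    have hcard : Fintype.card (Fin e) < Fintype.card (Fin (e + 1)) := by simp
    obtain ⟨a, b, hab, hfab⟩ := Fintype.exists_ne_map_eq_of_card_lt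
      (fun k : Fin (e + 1) => (⟨(l.take k.val).sum % e, Nat.mod_lt _ hepos⟩ : Fin e)) hcard
    have hval : (l.take a.val).sum % e = (l.take b.val).sum % e := by
      simpa [Fin.mk.injEq] using hfab
    obtain ⟨i, j, hij, hjle, hmod⟩ :
        ∃ i j : ℕ, i < j ∧ j ≤ e ∧ (l.take i).sum % e = (l.take j).sum % e := by
      rcases lt_or_gt_of_ne hab with h | h
      · exact ⟨a.val, b.val, h, Nat.lt_succ_iff.mp b.isLt, hval⟩
      · exact ⟨b.val, a.val, h, Nat.lt_succ_iff.mp a.isLt, hval.symm⟩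
    set A := l.take i with hA
    set B := (l.drop i).take (j - i) with hB
    set C := l.drop j with hC
    have hsplit : l = A ++ (B ++ C) := by
      rw [hA, hB, hC]
      have hdj : l.drop j = (l.drop i).drop (j - i) := by
        rw [List.drop_drop]; congr 1; omega
      rw [hdj, List.take_append_drop, List.take_append_drop]
    have htakej : l.take j = A ++ B := by
      rw [hA, hB]
      conv_lhs => rw [← List.take_append_drop i (l.take j)]
      rw [List.take_take, Nat.min_eq_left hij.le, List.drop_take]
    -- B.sum is a positive multiple of e
    have hsumj : (l.take j).sum = A.sum + B.sum := by rw [htakej, List.sum_append]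
    have hdvd : e ∣ B.sum := by
      have hmod' : A.sum ≡ A.sum + B.sum [MOD e] := by
        unfold Nat.ModEq; rw [← hsumj]; exact hmod
      have := (Nat.modEq_iff_dvd' (Nat.le_add_right _ _)).mp hmod'
      simpa [Nat.add_sub_cancel_left] using this
    have hBmem : ∀ m ∈ B, m ∈ M := by
      intro m hm
      apply hlM
      rw [hsplit]; simp [hm]
    have hCmem : ∀ m ∈ C, m ∈ M := by
      intro m hm
      apply hlM
      rw [hsplit]; simp [hm]
    have hAmem : ∀ m ∈ A, m ∈ M := by
      intro m hm
      apply hlM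
      rw [hsplit]; simp [hm]
    have hBlen : B.length = j - i := by
      rw [hB, List.length_take, List.length_drop, hlen]; omega
    have hBge : (j - i) * e ≤ B.sum := by
      rw [← hBlen]
      exact length_mul_le_sum B (fun m hm => hle m (hBmem m hm))
    obtain ⟨c, hc⟩ := hdvd
    have hcomm : e * c = c * e := Nat.mul_comm e c
    have hcge : j - i ≤ c := by
      by_contra hlt
      push_neg at hlt
      have : c * e < (j - i) * e := (Nat.mul_lt_mul_right hepos).mpr hlt
      omega
    have hc1 : 1 ≤ c := by omega
    obtain ⟨d, rfl⟩ : ∃ d, c = d + 1 := ⟨c - 1, by omega⟩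
    -- new list
    set L := A ++ C ++ List.replicate d e with hL
    have hLmem : ∀ m ∈ L, m ∈ M := by
      intro m hm
      rw [hL] at hm
      simp only [List.mem_append, List.mem_replicate] at hm
      rcases hm with (h | h) | h
      · exact hAmem m h
      · exact hCmem m h
      · exact h.2 ▸ heM
    have hLlen : e - 1 ≤ L.length := by
      have hA' : A.length = i := by rw [hA, List.length_take, hlen]; omega
      have hC' : C.length = e - j := by rw [hC, List.length_drop, hlen]
      rw [hL]
      simp only [List.length_append, List.length_replicate, hA', hC']
      omega
    have hLsum : l.sum = e + L.sum := by
      have h1 : l.sum = A.sum + B.sum + C.sum := by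
        conv_lhs => rw [hsplit]
        simp [List.sum_append]; ring
      have h2 : L.sum = A.sum + C.sum + d * e := by
        rw [hL]; simp [List.sum_append]; ring
      have h3 : e * (d + 1) = d * e + e := by ring
      omega
    refine ⟨s + L.sum, ?_, by omega⟩
    exact nfold_anti hcl hMS hLlen (mem_nfold_of_list hcl L hLmem s hs)
  -- conclude: (e-1) is in the set, so r ≤ e-1
  apply hr.2
  show nfold S M ((e - 1) + 1) = (e + ·) '' nfold S M (e - 1)
  have he1 : (e - 1) + 1 = e := by omega
  rw [he1]
  ext x
  constructor
  · intro hx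
    obtain ⟨y, hy, hxy⟩ := key x hx
    exact ⟨y, hy, hxy.symm⟩
  · rintro ⟨y, hy, rfl⟩
    have h1 : y + e ∈ nfold S M (e - 1) + M := Set.add_mem_add hy heM
    have h2 : y + e ∈ nfold S M ((e - 1) + 1) := h1
    rw [he1] at h2
    simpa [add_comm] using h2
end

section
/- Let S be a numerical semigroup with multiplicity e and maximal ideal M. The reduction number of S equals 1 (i.e., 2M = e + M) if and only if S is minimally generated by exactly e elements (S has maximal embedding dimension). -/
open Pointwise

theorem reduction_number_one_iff_max_embdim (S : Set ℕ) (hS : IsNumericalSemigroup S)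
    (e : ℕ) (he : IsMultiplicity S e) :
    nfold S (S \ {0}) 2 = (e + ·) '' nfold S (S \ {0}) 1 ↔
    ((S \ {0}) \ ((S \ {0}) + (S \ {0}))).ncard = e := by
  obtain ⟨h0, hadd, hfin⟩ := hS
  obtain ⟨⟨heS, hepos⟩, hle⟩ := he
  set M : Set ℕ := S \ {0} with hMdef
  have heM : e ∈ M := ⟨heS, by simp; omega⟩
  -- S + M = M
  have hSM : S + M = M := by
    ext x
    constructor
    · rintro ⟨s, hs, m, ⟨hm, hm0⟩, rfl⟩
      refine ⟨hadd s hs m hm, ?_⟩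
      simp at hm0 ⊢
      omega
    · intro hx
      exact ⟨0, h0, x, hx, by ring⟩
  have h1 : nfold S M 1 = M := by
    show S + M = M
    exact hSM
  have h2 : nfold S M 2 = M + M := by
    show nfold S M 1 + M = M + M
    rw [h1]
  have himg : (e + ·) '' M = {e} + M := by
    rw [Set.singleton_add]
  -- closure under adding multiples of e
  have haddmul : ∀ a ∈ S, ∀ k : ℕ, a + e * k ∈ S := by
    intro a ha k
    induction k with
    | zero => simpa using ha
    | succ n ih =>
      have := hadd _ ih e heS
      have heq : a + e * n + e = a + e * (n + 1) := by ring
      rwa [heq] at this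
  -- step lemma
  have hstep : ∀ a ∈ M, ∀ b ∈ S, a % e = b % e → a < b → b ∈ {e} + M := by
    intro a ha b hb hmod hab
    have hdvd : e ∣ b - a := (Nat.modEq_iff_dvd' hab.le).mp hmod
    obtain ⟨k, hk⟩ := hdvd
    obtain ⟨j, rfl⟩ : ∃ j, k = j + 1 := by
      rcases k with _ | n
      · simp at hk; omega
      · exact ⟨n, rfl⟩
    have hc : a + e * j ∈ S := haddmul a ha.1 j
    have ha0 : a ≠ 0 := by
      have := ha.2; simpa using this
    have hcM : a + e * j ∈ M := ⟨hc, by simp; omega⟩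
    refine Set.mem_add.mpr ⟨e, rfl, a + e * j, hcM, ?_⟩
    have heq : e * (j + 1) = e * j + e := by ring
    omega
  -- each residue class is inhabited in M
  have hclass : ∀ i < e, {m | m ∈ M ∧ m % e = i}.Nonempty := by
    intro i hi
    obtain ⟨N, hN⟩ := hfin.bddAbove
    have hposmul : 0 < (N + 1) * e := Nat.mul_pos (Nat.succ_pos N) hepos
    have hmemS : (N + 1) * e + i ∈ S := by
      by_contra h
      have hle' : (N + 1) * e + i ≤ N := hN h
      nlinarith [hepos]
    refine ⟨(N + 1) * e + i, ⟨⟨hmemS, by simp; omega⟩, ?_⟩⟩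
    have hcomm : (N + 1) * e + i = i + (N + 1) * e := by ring
    rw [hcomm, Nat.add_mul_mod_self_right]
    exact Nat.mod_eq_of_lt hi
  -- the Apery-type elements
  set W : ℕ → ℕ := fun i => sInf {m | m ∈ M ∧ m % e = i} with hWdef
  have hWmem : ∀ i < e, W i ∈ M ∧ W i % e = i := fun i hi => Nat.sInf_mem (hclass i hi)
  have hWmin : ∀ i, ∀ m ∈ M, m % e = i → W i ≤ m := by
    intro i m hm hmi
    exact Nat.sInf_le ⟨hm, hmi⟩
  -- key identification
  have hkey : M \ ({e} + M) = W '' (Set.Iio e) := by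
    ext m
    constructor
    · rintro ⟨hm, hnm⟩
      have hi : m % e < e := Nat.mod_lt _ hepos
      refine ⟨m % e, hi, ?_⟩
      have hWle : W (m % e) ≤ m := hWmin _ m hm rfl
      rcases Nat.lt_or_ge (W (m % e)) m with h | h
      · exact absurd (hstep _ (hWmem _ hi).1 m hm.1 (by rw [(hWmem _ hi).2]) h) hnm
      · omega
    · rintro ⟨i, hi, rfl⟩
      refine ⟨(hWmem i hi).1, ?_⟩
      rintro hmem
      obtain ⟨a, ha, c, hc, hac⟩ := Set.mem_add.mp hmem
      rw [Set.mem_singleton_iff] at ha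
      rw [ha] at hac
      have hcres : c % e = i := by
        rw [← (hWmem i hi).2, ← hac, Nat.add_mod_left]
      have := hWmin i c hc hcres
      omega
  have hWinj : Set.InjOn W (Set.Iio e) := by
    intro i hi j hj hij
    have h1 := (hWmem i hi).2
    have h2 := (hWmem j hj).2
    rw [← h1, ← h2, hij]
  have hcard : (M \ ({e} + M)).ncard = e := by
    rw [hkey, Set.ncard_image_of_injOn hWinj]
    rw [← Finset.coe_range, Set.ncard_coe_finset, Finset.card_range]
  have hfinkey : (M \ ({e} + M)).Finite := by
    rw [hkey]
    exact (Set.finite_Iio e).image W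
  -- e + M ⊆ M + M
  have hsub2 : {e} + M ⊆ M + M := by
    intro x hx
    obtain ⟨a, ha, c, hc, hac⟩ := Set.mem_add.mp hx
    rw [Set.mem_singleton_iff] at ha
    rw [ha] at hac
    exact Set.mem_add.mpr ⟨e, heM, c, hc, hac⟩
  rw [h1, h2, himg]
  constructor
  · intro h
    rw [h]
    exact hcard
  · intro h
    have hsub : M \ (M + M) ⊆ M \ ({e} + M) := fun x hx => ⟨hx.1, fun hc => hx.2 (hsub2 hc)⟩
    have heq : M \ (M + M) = M \ ({e} + M) :=
      Set.eq_of_subset_of_ncard_le hsub (by omega) hfinkey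
    apply Set.Subset.antisymm
    · intro x hx
      have hxM : x ∈ M := by
        have : M + M ⊆ S + M := Set.add_subset_add_right (Set.diff_subset)
        rw [hSM] at this
        exact this hx
      by_contra hxe
      have : x ∈ M \ ({e} + M) := ⟨hxM, hxe⟩
      rw [← heq] at this
      exact this.2 hx
    · exact hsub2
end

section
/- Let S be a numerical semigroup with multiplicity e and maximal ideal M, and suppose the reduction number is 1 (2M = e + M). Writing the minimal generators of S as e = n_0 < n_1 < ... < n_{e-1}, the generators n_1, ..., n_{e-1} lie in pairwise distinct nonzero residue classes modulo e, and Ap(S) = {0, n_1, ..., n_{e-1}}. -/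
open Pointwise

theorem generators_of_reduction_number_one (S : Set ℕ) (hS : IsNumericalSemigroup S)
    (e : ℕ) (he : IsMultiplicity S e)
    (h1 : nfold S (S \ {0}) 2 = (e + ·) '' nfold S (S \ {0}) 1) :
    (∀ a ∈ ((S \ {0}) \ ((S \ {0}) + (S \ {0}))) \ {e},
      ∀ b ∈ ((S \ {0}) \ ((S \ {0}) + (S \ {0}))) \ {e},
        a ≠ b → a % e ≠ b % e) ∧
    (∀ a ∈ ((S \ {0}) \ ((S \ {0}) + (S \ {0}))) \ {e}, a % e ≠ 0) ∧
    aperySet e S = insert 0 ((((S \ {0}) \ ((S \ {0}) + (S \ {0})))) \ {e}) := by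
  obtain ⟨h0S, hadd, hfin⟩ := hS
  obtain ⟨⟨heS, hepos⟩, hleast'⟩ := he
  have hleast : ∀ m ∈ S, 0 < m → e ≤ m := fun m hm hp => hleast' ⟨hm, hp⟩
  set M := S \ {0} with hMdef
  have hmem : ∀ x, x ∈ M ↔ x ∈ S ∧ x ≠ 0 := by
    intro x; simp [hMdef]
  have heM : e ∈ M := (hmem e).2 ⟨heS, by omega⟩
  have hSM : S + M = M := by
    ext x
    rw [Set.mem_add]
    constructor
    · rintro ⟨s, hs, m, hm, hx⟩
      rw [hmem] at hm ⊢
      exact ⟨hx ▸ hadd s hs m hm.1, by omega⟩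
    · intro hx
      exact ⟨0, h0S, x, hx, zero_add x⟩
  have h2 : M + M = (e + ·) '' M := by
    have e2 : nfold S M 2 = M + M := by
      show (S + M) + M = M + M
      rw [hSM]
    have e1 : nfold S M 1 = M := hSM
    rw [e2, e1] at h1
    exact h1
  have key : ∀ x, x ∈ M + M → ∃ m, m ∈ M ∧ x = e + m := by
    intro x hx
    rw [h2] at hx
    obtain ⟨m, hm, rfl⟩ := hx
    exact ⟨m, hm, rfl⟩
  have hmulte : ∀ k : ℕ, k * e ∈ S := by
    intro k; induction k with
    | zero => simpa using h0S
    | succ n ih => have := hadd _ ih e heS; simpa [Nat.succ_mul] using this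
  have hmultM : ∀ j : ℕ, 1 ≤ j → e * j ∈ M := by
    intro j hj
    refine (hmem _).2 ⟨by simpa [mul_comm] using hmulte j, ?_⟩
    have := Nat.mul_pos hepos hj
    omega
  have hsum : ∀ j : ℕ, 1 ≤ j → e * (j - 1) + e = e * j := by
    intro j hj
    rw [← Nat.mul_succ]
    congr 1
    omega
  -- Lemma A : generators ≠ e are minimal in their residue class
  have lemA : ∀ a, a ∈ M → a ∉ M + M → a ≠ e → ∀ k ∈ S, k % e = a % e → a ≤ k := by
    intro a haM haG hae k hkS hk
    by_contra hlt
    push_neg at hlt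
    obtain ⟨haS, ha0⟩ := (hmem a).1 haM
    have hdvd : e ∣ a - k := (Nat.modEq_iff_dvd' (le_of_lt hlt)).1 hk
    obtain ⟨j, hj⟩ := hdvd
    have hejpos : 0 < e * j := by omega
    have hjpos : 1 ≤ j := by
      rcases Nat.eq_zero_or_pos j with rfl | h
      · simp at hejpos
      · exact h
    rcases Nat.eq_zero_or_pos k with rfl | hkpos
    · -- a = e * j with j ≥ 2
      have hj2 : 2 ≤ j := by
        by_contra h
        push_neg at h
        have : j = 1 := by omega
        subst this
        simp at hj
        exact hae (by omega)
      apply haG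
      have hs := hsum j hjpos
      have hb : a = e + e * (j - 1) := by omega
      rw [hb]
      exact Set.add_mem_add heM (hmultM (j - 1) (by omega))
    · apply haG
      have hb : a = k + e * j := by omega
      rw [hb]
      exact Set.add_mem_add ((hmem _).2 ⟨hkS, by omega⟩) (hmultM j hjpos)
  -- Lemma B : nonzero residue
  have lemB : ∀ a, a ∈ M → a ∉ M + M → a ≠ e → a % e ≠ 0 := by
    intro a haM haG hae hmod
    obtain ⟨haS, ha0⟩ := (hmem a).1 haM
    have hge : e ≤ a := hleast a haS (by omega)
    obtain ⟨j, hj⟩ : e ∣ a := Nat.dvd_of_mod_eq_zero hmod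
    have hjpos : 1 ≤ j := by
      rcases Nat.eq_zero_or_pos j with rfl | h
      · simp at hj; omega
      · exact h
    have hj2 : 2 ≤ j := by
      by_contra h
      push_neg at h
      have : j = 1 := by omega
      subst this
      simp at hj
      exact hae hj
    apply haG
    have hs := hsum j hjpos
    have hb : a = e + e * (j - 1) := by omega
    rw [hb]
    exact Set.add_mem_add heM (hmultM (j - 1) (by omega))
  -- Lemma C : distinct residues
  have lemC : ∀ a, a ∈ M → ∀ b, b ∈ M → b ∉ M + M → a < b → a % e = b % e → False := by
    intro a haM b hbM hbG hab hmod
    have hdvd : e ∣ b - a := (Nat.modEq_iff_dvd' (le_of_lt hab)).1 hmod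
    obtain ⟨j, hj⟩ := hdvd
    have hejpos : 0 < e * j := by omega
    have hjpos : 1 ≤ j := by
      rcases Nat.eq_zero_or_pos j with rfl | h
      · simp at hejpos
      · exact h
    apply hbG
    have hb : b = a + e * j := by omega
    rw [hb]
    exact Set.add_mem_add haM (hmultM j hjpos)
  refine ⟨?_, ?_, ?_⟩
  · intro a ha b hb hne hmod
    obtain ⟨⟨haM, haG⟩, hae⟩ := ha
    obtain ⟨⟨hbM, hbG⟩, hbe⟩ := hb
    rcases lt_trichotomy a b with h | h | h
    · exact lemC a haM b hbM hbG h hmod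
    · exact hne h
    · exact lemC b hbM a haM haG h hmod.symm
  · rintro a ⟨⟨haM, haG⟩, hae⟩
    exact lemB a haM haG (by simpa using hae)
  · ext x
    simp only [aperySet, Set.mem_setOf_eq, Set.mem_insert_iff, Set.mem_diff,
      Set.mem_singleton_iff]
    constructor
    · rintro ⟨hxS, hmin⟩
      rcases Nat.eq_zero_or_pos x with rfl | hxpos
      · left; rfl
      right
      have hxM : x ∈ M := (hmem x).2 ⟨hxS, by omega⟩
      have hxe : x ≠ e := by
        intro h
        subst h
        have := hmin 0 h0S (by simp [Nat.mod_self])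
        omega
      refine ⟨⟨hxM, ?_⟩, hxe⟩
      intro hxMM
      obtain ⟨m, hmM, hx⟩ := key x hxMM
      have hmS := (hmem m).1 hmM
      have := hmin m hmS.1 (by rw [hx]; exact (Nat.add_mod_left e m).symm)
      omega
    · rintro (rfl | ⟨⟨haM, haG⟩, hae⟩)
      · exact ⟨h0S, fun k _ _ => Nat.zero_le k⟩
      · exact ⟨((hmem x).1 haM).1, lemA x haM haG hae⟩
end
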